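/- Let $\beta>0$, $M\ge 0$, and let $h:[0,\infty)\to[0,\infty)$ be $1$-periodic with $\int_0^1 h\le M$. Suppose nonnegative functions $E,D$ on $[0,\infty)$ satisfy $E(t)+\int_0^t e^{-\beta(t-s)}D(s)\,ds\le e^{-\beta t}E(0)+\int_0^t e^{-\beta(t-s)}h(s)\,ds$ for all $t$. Then $E(t)+\int_0^t e^{-\beta(t-s)}D(s)\,ds\le e^{-\beta t}E(0)+\frac{2e^{\beta}}{e^{\beta}-1}M$ for all $t\ge 0$. -/

import Mathlib

open MeasureTheory intervalIntegral

/-!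
Write `F(t) = ∫₀ᵗ e^{-β(t-s)} h(s) ds`. Splitting the integral at `t - 1` and using periodicity
gives `F(t) ≤ e^{-β} F(t - 1) + ∫₀¹ h`, while `F(t) ≤ 0` for `t ≤ 0`. By induction on the number of
periods, `F` stays below the fixed point `B = (1 - e^{-β})⁻¹ ∫₀¹ h = e^β/(e^β - 1) ∫₀¹ h` of
`B ↦ e^{-β} B + ∫₀¹ h`. Extending `h` from `[0, ∞)` to `h ∘ Int.fract` makes it genuinely periodic.
-/

noncomputable def duhamel (β : ℝ) (g : ℝ → ℝ) (t : ℝ) : ℝ :=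
  ∫ s in (0:ℝ)..t, Real.exp (-β * (t - s)) * g s

section Duhamel

variable {β : ℝ} {g : ℝ → ℝ}

lemma intervalIntegrable_exp_mul {a b : ℝ} (hg : IntervalIntegrable g volume a b) (t : ℝ) :
    IntervalIntegrable (fun s => Real.exp (-β * (t - s)) * g s) volume a b :=
  hg.continuousOn_mul (by fun_prop)

lemma duhamel_eq_exp_mul_duhamel_sub_add (hg : ∀ a b, IntervalIntegrable g volume a b)
    (t T : ℝ) :
    duhamel β g t = Real.exp (-β * T) * duhamel β g (t - T)
      + ∫ s in (t - T)..t, Real.exp (-β * (t - s)) * g s := by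
  have hhead : ∫ s in (0:ℝ)..(t - T), Real.exp (-β * (t - s)) * g s
      = Real.exp (-β * T) * duhamel β g (t - T) := by
    rw [duhamel, ← intervalIntegral.integral_const_mul]
    refine integral_congr fun s _ => ?_
    rw [← mul_assoc, ← Real.exp_add]
    ring_nf
  rw [← hhead, duhamel, integral_add_adjacent_intervals (intervalIntegrable_exp_mul (hg _ _) t)
    (intervalIntegrable_exp_mul (hg _ _) t)]

lemma duhamel_nonpos (hg : ∀ s, 0 ≤ g s) {t : ℝ} (ht : t ≤ 0) : duhamel β g t ≤ 0 := by
  rw [duhamel, integral_symm, neg_nonpos]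
  exact integral_nonneg ht fun s _ => mul_nonneg (Real.exp_pos _).le (hg s)

lemma integral_exp_mul_le_integral (hβ : 0 ≤ β) (hg : ∀ s, 0 ≤ g s) {a t : ℝ} (hat : a ≤ t)
    (hint : IntervalIntegrable g volume a t) :
    ∫ s in a..t, Real.exp (-β * (t - s)) * g s ≤ ∫ s in a..t, g s := by
  refine integral_mono_on hat (intervalIntegrable_exp_mul hint t) hint fun s hs => ?_
  have hexp : Real.exp (-β * (t - s)) ≤ 1 :=
    Real.exp_le_one_iff.2 (by nlinarith [hs.2])
  exact mul_le_of_le_one_left (hg s) hexp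

lemma Function.Periodic.duhamel_le_exp_mul_duhamel_sub_add {T : ℝ}
    (hper : Function.Periodic g T) (hβ : 0 ≤ β) (hg : ∀ s, 0 ≤ g s)
    (hloc : ∀ a b, IntervalIntegrable g volume a b) (hT : 0 ≤ T) (t : ℝ) :
    duhamel β g t ≤ Real.exp (-β * T) * duhamel β g (t - T) + ∫ s in (0:ℝ)..T, g s := by
  have hperiod := hper.intervalIntegral_add_eq (t - T) 0
  rw [sub_add_cancel, zero_add] at hperiod
  rw [duhamel_eq_exp_mul_duhamel_sub_add hloc t T, ← hperiod]
  gcongr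
  exact integral_exp_mul_le_integral hβ hg (by linarith) (hloc _ _)

theorem Function.Periodic.duhamel_le {T : ℝ} (hper : Function.Periodic g T) (hT : 0 < T)
    (hβ : 0 < β) (hg : ∀ s, 0 ≤ g s) (hint : IntervalIntegrable g volume 0 T) (t : ℝ) :
    duhamel β g t ≤ (1 - Real.exp (-β * T))⁻¹ * ∫ s in (0:ℝ)..T, g s := by
  have hloc := hper.intervalIntegrable₀ hT.ne' hint
  set c := Real.exp (-β * T)
  set I := ∫ s in (0:ℝ)..T, g s
  set B := (1 - c)⁻¹ * I
  have hc : 0 < 1 - c := sub_pos.2 (Real.exp_lt_one_iff.2 (by nlinarith))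
  have hB_fixed : c * B + I = B := by
    simp only [B]
    field_simp
    ring
  have hB0 : 0 ≤ B := mul_nonneg (inv_nonneg.2 hc.le) (integral_nonneg hT.le fun s _ => hg s)
  suffices ∀ n : ℕ, ∀ t ≤ n * T, duhamel β g t ≤ B by
    obtain ⟨n, hn⟩ := exists_nat_ge (t / T)
    exact this n t ((div_le_iff₀ hT).1 hn)
  intro n
  induction n with
  | zero => exact fun t ht => (duhamel_nonpos hg (by simpa using ht)).trans hB0
  | succ n ih =>
    intro t ht
    have hprev := ih (t - T) (by push_cast at ht; linarith)
    calc duhamel β g t ≤ c * duhamel β g (t - T) + I :=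
          hper.duhamel_le_exp_mul_duhamel_sub_add hβ.le hg hloc hT.le t
      _ ≤ c * B + I := by gcongr
      _ = B := hB_fixed

end Duhamel

lemma apply_fract_eq_of_add_one {α : Type*} {f : ℝ → α} (hf : ∀ s, 0 ≤ s → f (s + 1) = f s)
    {s : ℝ} (hs : 0 ≤ s) : f (Int.fract s) = f s := by
  have hshift : ∀ n : ℕ, f (Int.fract s + n) = f (Int.fract s) := by
    intro n
    induction n with
    | zero => simp
    | succ n ih =>
      rw [Nat.cast_succ, ← add_assoc, hf _ (by positivity), ih]
  rw [← hshift ⌊s⌋₊, natCast_floor_eq_intCast_floor hs, Int.fract_add_floor]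

lemma inv_one_sub_exp_neg {x : ℝ} (hx : x ≠ 0) :
    (1 - Real.exp (-x))⁻¹ = Real.exp x / (Real.exp x - 1) := by
  have hx' : Real.exp x - 1 ≠ 0 := sub_ne_zero.2 (mt (Real.exp_eq_one_iff x).1 hx)
  rw [Real.exp_neg]
  field_simp

theorem gronwall_periodic_uniform_bound_general
    (β M : ℝ) (hβ : 0 < β)
    (h : ℝ → ℝ)
    (hnonneg : ∀ s, 0 ≤ h s)
    (hper : ∀ s : ℝ, 0 ≤ s → h (s + 1) = h s)
    (hint : IntervalIntegrable h volume 0 1)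
    (hintM : ∫ s in (0:ℝ)..1, h s ≤ M)
    (E D : ℝ → ℝ)
    (hineq : ∀ t : ℝ, 0 ≤ t →
      E t + ∫ s in (0:ℝ)..t, Real.exp (-β * (t - s)) * D s
        ≤ Real.exp (-β * t) * E 0
          + ∫ s in (0:ℝ)..t, Real.exp (-β * (t - s)) * h s) :
    ∀ t : ℝ, 0 ≤ t →
      E t + ∫ s in (0:ℝ)..t, Real.exp (-β * (t - s)) * D s
        ≤ Real.exp (-β * t) * E 0
          + (2 * Real.exp β / (Real.exp β - 1)) * M := by
  intro t ht
  set g : ℝ → ℝ := h ∘ Int.fract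
  have hgh : ∀ s, 0 ≤ s → g s = h s := fun s hs => apply_fract_eq_of_add_one hper hs
  have hg_int : IntervalIntegrable g volume 0 1 :=
    hint.congr fun s hs => (hgh s (Set.uIoc_of_le (zero_le_one' ℝ) ▸ hs).1.le).symm
  have hduh : ∫ s in (0:ℝ)..t, Real.exp (-β * (t - s)) * h s = duhamel β g t :=
    integral_congr fun s hs => by rw [hgh s (Set.uIcc_of_le ht ▸ hs).1]
  have hI : ∫ s in (0:ℝ)..1, g s = ∫ s in (0:ℝ)..1, h s :=
    integral_congr fun s hs => hgh s (Set.uIcc_of_le (zero_le_one' ℝ) ▸ hs).1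
  have hbound := ((Int.fract_periodic ℝ).comp h).duhamel_le one_pos hβ (fun s => hnonneg _)
    hg_int t
  rw [hI, mul_one, inv_one_sub_exp_neg hβ.ne'] at hbound
  have hM : 0 ≤ M := (integral_nonneg zero_le_one fun s _ => hnonneg s).trans hintM
  have hK : 0 ≤ Real.exp β / (Real.exp β - 1) :=
    div_nonneg (Real.exp_pos β).le (sub_nonneg.2 (Real.one_le_exp hβ.le))
  calc E t + ∫ s in (0:ℝ)..t, Real.exp (-β * (t - s)) * D s
      ≤ Real.exp (-β * t) * E 0 + duhamel β g t := hduh ▸ hineq t ht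
    _ ≤ Real.exp (-β * t) * E 0 + Real.exp β / (Real.exp β - 1) * M := by
      gcongr
      exact hbound.trans (by gcongr)
    _ ≤ Real.exp (-β * t) * E 0 + (2 * Real.exp β / (Real.exp β - 1)) * M := by
      rw [mul_div_assoc]
      gcongr
      linarith

/-- Combination of the exponential Gronwall estimate with the periodic
integral lemma (Lemma 4.2): for 1-periodic forcing `h` with `∫₀¹ h ≤ M`,
the Duhamel bound yields a uniform-in-time estimate. -/
theorem gronwall_periodic_uniform_bound
    (β M : ℝ) (hβ : 0 < β) (hM : 0 ≤ M)
    (h : ℝ → ℝ)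
    (hmeas : Measurable h)
    (hnonneg : ∀ s, 0 ≤ h s)
    (hper : ∀ s : ℝ, 0 ≤ s → h (s + 1) = h s)
    (hint : IntervalIntegrable h volume 0 1)
    (hintM : ∫ s in (0:ℝ)..1, h s ≤ M)
    (E D : ℝ → ℝ)
    (hEnonneg : ∀ t, 0 ≤ t → 0 ≤ E t)
    (hDnonneg : ∀ t, 0 ≤ t → 0 ≤ D t)
    (hineq : ∀ t : ℝ, 0 ≤ t →
      E t + ∫ s in (0:ℝ)..t, Real.exp (-β * (t - s)) * D s
        ≤ Real.exp (-β * t) * E 0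
          + ∫ s in (0:ℝ)..t, Real.exp (-β * (t - s)) * h s) :
    ∀ t : ℝ, 0 ≤ t →
      E t + ∫ s in (0:ℝ)..t, Real.exp (-β * (t - s)) * D s
        ≤ Real.exp (-β * t) * E 0
          + (2 * Real.exp β / (Real.exp β - 1)) * M :=
  gronwall_periodic_uniform_bound_general β M hβ h hnonneg hper hint hintM E D hineq
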